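/- Let 1 ≤ k ≤ n, let S = {s_1,...,s_n} be the simple transpositions of S_{n+1}, and let J(k,n) = {s_{n-k+1},...,s_n}. Define S(J(k,n)) = {A ⊆ S : no connected component of A is contained in J(k,n)}, and for A ∈ S(J(k,n)) set A*_k = A ∪ {s ∈ J(k,n) : s commutes with every element of A}, and h_k(t) = Σ_{A ∈ S(J(k,n))} ((n+1)!/|W_{A*_k}|)(t-1)^{|A|}. Then for 1 ≤ k ≤ n: h_k(t) = h_{k-1}(t) - C(n+1, k+1)(t^k + t^{k-1} + ... + t) E_{n-k}(t), where h_0(t) = E_{n+1}(t). -/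

import Mathlib

open Polynomial Finset

/-- Number of descents of a permutation of `Fin m`. -/
noncomputable def des {m : ℕ} (σ : Equiv.Perm (Fin m)) : ℕ :=
  Nat.card {i : Fin m // ∃ h : (i : ℕ) + 1 < m, σ ⟨(i : ℕ) + 1, h⟩ < σ i}

/-- The `m`-th Eulerian polynomial `∑_{σ ∈ S_m} t^{des σ}` (over `ℚ`). -/
noncomputable def Euler (m : ℕ) : Polynomial ℚ :=
  ∑ σ : Equiv.Perm (Fin m), X ^ des σ

/-- The simple transposition `s_{i+1} = (i+1, i+2)` in `S_{n+1}`. -/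
def sT {n : ℕ} (i : Fin n) : Equiv.Perm (Fin (n + 1)) :=
  Equiv.swap i.castSucc i.succ

/-- The standard parabolic subgroup of `S_{n+1}` generated by a set of simple
transpositions (indexed by `A ⊆ Fin n`). -/
def Wsub {n : ℕ} (A : Finset (Fin n)) : Subgroup (Equiv.Perm (Fin (n + 1))) :=
  Subgroup.closure (sT '' (A : Set (Fin n)))

/-- `x` and `y` lie in the same connected component of `A` in the type `A_n`
Coxeter graph (path graph: `s_i ~ s_{i+1}`). -/
def sameComp {n : ℕ} (A : Finset (Fin n)) (x y : Fin n) : Prop :=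
  Relation.ReflTransGen
    (fun a b => a ∈ A ∧ b ∈ A ∧ ((a : ℕ) + 1 = (b : ℕ) ∨ (b : ℕ) + 1 = (a : ℕ))) x y

/-- No connected component of `A` is contained entirely in `J`. -/
def noCompIn {n : ℕ} (A J : Finset (Fin n)) : Prop :=
  ∀ a ∈ A, ∃ b ∈ A, b ∉ J ∧ sameComp A a b

open scoped Classical in
/-- `A* = A ∪ {s ∈ J : s commutes with all t ∈ A}`. -/
noncomputable def Astar {n : ℕ} (A J : Finset (Fin n)) : Finset (Fin n) :=
  A ∪ J.filter (fun j => ∀ a ∈ A, Commute (sT j) (sT a))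

/-- `J(k,n) = {s_{n-k+1}, ..., s_n}` as a subset of the index set `Fin n`. -/
def Jset (n k : ℕ) : Finset (Fin n) :=
  Finset.univ.filter (fun j : Fin n => n - k ≤ (j : ℕ))

open scoped Classical in
/-- The `h`-polynomial of `X(J(k,n))`. -/
noncomputable def hpol (n k : ℕ) : Polynomial ℚ :=
  ∑ A ∈ Finset.univ.filter (fun A : Finset (Fin n) => noCompIn A (Jset n k)),
    (((n + 1).factorial : ℚ) /
        (Nat.card ↥(Wsub (Astar A (Jset n k))) : ℚ)) • (X - 1) ^ A.card

/-!
For `J = ∅` the coefficient `(n+1)!/|W_A|` counts the permutations whose ascent set contains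
`A`: each left coset of the Young subgroup `W_A` contains exactly one of them. Summing `(t-1)^|A|`
over the subsets `A` of each ascent set gives `∑_σ t^{asc σ}`, which is `E_{n+1}` after reversing
the permutations.

Put `m = n - k`. Passing from `J(k)` to `J(k-1)` changes `h` in two ways. For
`A ⊆ {s_1, …, s_{m-1}}` the set `A*` loses `s_{m+1}`, so `|W_{A*}| = |W_A| (k+1)!` becomes
`|W_A| k!`; for every other `A ∈ S(J(k))` the set `A*` does not change. The sets of `S(J(k-1))`
not in `S(J(k))` are the `A' ∪ {s_{m+1}, …, s_{m+i+1}}` with `A' ⊆ {s_1, …, s_{m-1}}` and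
`i < k`, and then `W_{A*}` is `W_{A'} × S_{i+2} × S_{k-1-i}`. In both cases the sums over `A'`
are the `J = ∅` case for `S_m`, i.e. `E_m`, and what is left is
`k + ∑_{i<k} C(k+1, i+2) (t-1)^{i+1} = t + ⋯ + t^k`.
-/

open Equiv Equiv.Perm

lemma Equiv.Perm.eq_one_of_strictMono {m : ℕ} {v : Perm (Fin m)} (hv : StrictMono v) :
    v = 1 := by
  ext x
  exact congrArg (fun e : Fin m ≃o Fin m => (e x : ℕ))
    (Subsingleton.elim (hv.orderIsoOfSurjective v v.surjective) (OrderIso.refl _))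

lemma Equiv.Perm.viaEmbedding_swap {α β : Type*} [DecidableEq α] [DecidableEq β]
    (ι : α ↪ β) (a b : α) : (swap a b).viaEmbedding ι = swap (ι a) (ι b) := by
  ext x
  by_cases hx : x ∈ Set.range ι
  · obtain ⟨y, rfl⟩ := hx
    rw [viaEmbedding_apply, ι.injective.swap_apply]
  · rw [viaEmbedding_apply_of_notMem _ _ _ hx, swap_apply_of_ne_of_ne] <;>
      · rintro rfl
        exact hx ⟨_, rfl⟩

lemma Finset.powerset_map {α β : Type*} (f : α ↪ β) (s : Finset α) :
    (s.map f).powerset = s.powerset.map (mapEmbedding f).toEmbedding := by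
  ext t
  simp only [mem_powerset, mem_map, subset_map_iff, RelEmbedding.coe_toEmbedding,
    mapEmbedding_apply]
  exact exists_congr fun u => and_congr_right fun _ => eq_comm

lemma sum_powerset_sub_one_pow {R α : Type*} [CommRing R] (x : R) (s : Finset α) :
    ∑ t ∈ s.powerset, (x - 1) ^ #t = x ^ #s := by
  simpa using sum_pow_mul_eq_add_pow (x - 1) 1 s

lemma sum_Icc_pow_mul_X_sub_one {R : Type*} [CommRing R] (k : ℕ) :
    (∑ i ∈ Icc 1 k, X ^ i : R[X]) * (X - 1) = X ^ (k + 1) - X := by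
  induction k with
  | zero => simp
  | succ k ih =>
    rw [sum_Icc_succ_top (by omega), add_mul, ih]
    ring

lemma sum_Icc_pow_eq {R : Type*} [CommRing R] [IsDomain R] (k : ℕ) :
    (∑ i ∈ Icc 1 k, X ^ i : R[X])
      = k + ∑ i ∈ range k, ((k + 1).choose (i + 2) : R[X]) * (X - 1) ^ (i + 1) := by
  refine mul_right_cancel₀ (X_sub_C_ne_zero (1 : R)) ?_
  rw [C_1, sum_Icc_pow_mul_X_sub_one]
  have hbinom : (X : R[X]) ^ (k + 1)
      = ∑ i ∈ range k, ((k + 1).choose (i + 2) : R[X]) * (X - 1) ^ (i + 2)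
        + ((k : R[X]) + 1) * (X - 1) + 1 := by
    conv_lhs => rw [← sub_add_cancel (X : R[X]) 1, add_pow]
    rw [sum_range_succ', sum_range_succ']
    simp only [one_pow, mul_one, zero_add, Nat.choose_one_right, Nat.choose_zero_right,
      pow_zero, pow_one, Nat.cast_one, Nat.cast_add]
    ring_nf
  rw [hbinom]
  conv_rhs => rw [add_mul, sum_mul]
  simp only [mul_assoc, ← pow_succ]
  ring

lemma factorial_div_sub_factorial_div (m k w : ℕ) (hw : 0 < w) :
    ((m + k + 1).factorial : ℚ) / (w * k.factorial)
        - (m + k + 1).factorial / (w * (k + 1).factorial)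
      = ((m + k + 1).choose (k + 1) * k : ℚ) * (m.factorial / w) := by
  have h := Nat.add_choose_mul_factorial_mul_factorial m (k + 1)
  rw [← add_assoc] at h
  rw [← h, Nat.factorial_succ k]
  push_cast
  field_simp
  ring

lemma factorial_div_eq_choose_mul (m k i w : ℕ) (hi : i < k) (hw : 0 < w) :
    ((m + k + 1).factorial : ℚ) / (w * (i + 2).factorial * (k - 1 - i).factorial)
      = ((m + k + 1).choose (k + 1) * (k + 1).choose (i + 2) : ℚ) * (m.factorial / w) := by
  have h := Nat.add_choose_mul_factorial_mul_factorial m (k + 1)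
  have h' := Nat.add_choose_mul_factorial_mul_factorial (k - 1 - i) (i + 2)
  rw [← add_assoc] at h
  rw [show k - 1 - i + (i + 2) = k + 1 by omega] at h'
  rw [← h, ← h']
  push_cast
  field_simp

section

variable {n : ℕ}

/-! ### Simple transpositions and minimal coset representatives -/

@[simp] lemma sT_apply_castSucc (i : Fin n) : sT i i.castSucc = i.succ := swap_apply_left _ _

@[simp] lemma sT_apply_succ (i : Fin n) : sT i i.succ = i.castSucc := swap_apply_right _ _

lemma sT_apply_of_ne {i : Fin n} {x : Fin (n + 1)} (h₁ : x ≠ i.castSucc) (h₂ : x ≠ i.succ) :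
    sT i x = x :=
  swap_apply_of_ne_of_ne h₁ h₂

lemma not_commute_sT_of_succ_eq {i j : Fin n} (h : (i : ℕ) + 1 = j) :
    ¬Commute (sT i) (sT j) := by
  intro hc
  have hij : i.succ = j.castSucc := Fin.ext (by simp [h])
  have hfix : sT j i.castSucc = i.castSucc :=
    sT_apply_of_ne (by simp [Fin.ext_iff]; omega) (by simp [Fin.ext_iff]; omega)
  have := congrArg (· i.castSucc) hc.eq
  simp only [Perm.mul_apply, hfix, sT_apply_castSucc, hij] at this
  simp [Fin.ext_iff] at this

lemma commute_sT_iff {i j : Fin n} :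
    Commute (sT i) (sT j) ↔ (i : ℕ) + 1 ≠ j ∧ (j : ℕ) + 1 ≠ i := by
  refine ⟨fun hc => ⟨fun h => not_commute_sT_of_succ_eq h hc,
    fun h => not_commute_sT_of_succ_eq h hc.symm⟩, fun ⟨h₁, h₂⟩ => ?_⟩
  rcases eq_or_ne i j with rfl | hij
  · exact Commute.refl _
  · refine (disjoint_swap_swap ?_).commute
    have := Fin.val_ne_of_ne hij
    simp only [List.nodup_cons, List.mem_cons, Fin.ext_iff, Fin.val_castSucc, Fin.val_succ,
      List.not_mem_nil, List.nodup_nil, or_false, not_false_eq_true, and_true]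
    omega

def ascents (σ : Perm (Fin (n + 1))) : Finset (Fin n) :=
  univ.filter fun i => σ i.castSucc < σ i.succ

lemma mem_ascents {σ : Perm (Fin (n + 1))} {i : Fin n} :
    i ∈ ascents σ ↔ σ i.castSucc < σ i.succ := by
  simp [ascents]

/-- The blocks of consecutive positions joined by `B` are the level sets of `blockIdx B`;
`Wsub B` is the Young subgroup permuting each block. -/
def blockIdx (B : Finset (Fin n)) (x : Fin (n + 1)) : ℕ :=
  #(univ.filter fun i : Fin n => i ∉ B ∧ i.castSucc < x)

lemma blockIdx_mono (B : Finset (Fin n)) : Monotone (blockIdx B) := fun _ _ hxy =>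
  card_le_card <| monotone_filter_right _ fun _ _ hi => ⟨hi.1, hi.2.trans_le hxy⟩

lemma blockIdx_succ_of_mem {B : Finset (Fin n)} {i : Fin n} (hi : i ∈ B) :
    blockIdx B i.succ = blockIdx B i.castSucc := by
  unfold blockIdx
  congr 1
  refine filter_congr fun j _ => and_congr_right fun hj => ?_
  rw [Fin.castSucc_lt_succ_iff, Fin.castSucc_lt_castSucc_iff, le_iff_lt_or_eq,
    or_iff_left (ne_of_mem_of_not_mem hi hj).symm]

lemma blockIdx_succ_of_not_mem {B : Finset (Fin n)} {i : Fin n} (hi : i ∉ B) :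
    blockIdx B i.succ = blockIdx B i.castSucc + 1 := by
  unfold blockIdx
  rw [← card_insert_of_notMem (s := univ.filter _) (a := i) (by simp)]
  congr 1
  ext j
  simp only [mem_filter, mem_univ, true_and, mem_insert, Fin.castSucc_lt_succ_iff,
    Fin.castSucc_lt_castSucc_iff]
  constructor
  · rintro ⟨hj, hji⟩
    rcases hji.lt_or_eq with h | rfl
    · exact Or.inr ⟨hj, h⟩
    · exact Or.inl rfl
  · rintro (rfl | ⟨hj, h⟩)
    · exact ⟨hi, le_rfl⟩
    · exact ⟨hj, h.le⟩

lemma blockIdx_sT {B : Finset (Fin n)} {i : Fin n} (hi : i ∈ B) (x : Fin (n + 1)) :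
    blockIdx B (sT i x) = blockIdx B x := by
  by_cases h₁ : x = i.castSucc
  · rw [h₁, sT_apply_castSucc, blockIdx_succ_of_mem hi]
  by_cases h₂ : x = i.succ
  · rw [h₂, sT_apply_succ, blockIdx_succ_of_mem hi]
  rw [sT_apply_of_ne h₁ h₂]

lemma sT_mem_Wsub {B : Finset (Fin n)} {i : Fin n} (hi : i ∈ B) : sT i ∈ Wsub B :=
  Subgroup.subset_closure ⟨i, hi, rfl⟩

lemma blockIdx_apply_of_mem_Wsub {B : Finset (Fin n)} {v : Perm (Fin (n + 1))}
    (hv : v ∈ Wsub B) (x : Fin (n + 1)) : blockIdx B (v x) = blockIdx B x := by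
  induction hv using Subgroup.closure_induction generalizing x with
  | mem _ h => obtain ⟨i, hi, rfl⟩ := h; exact blockIdx_sT hi x
  | one => rfl
  | mul v w _ _ hv hw => rw [Perm.mul_apply, hv, hw]
  | inv v _ hv => simpa using (hv (v⁻¹ x)).symm

lemma lt_of_blockIdx_eq {B : Finset (Fin n)} {u : Perm (Fin (n + 1))} (hu : B ⊆ ascents u)
    {x y : Fin (n + 1)} (hxy : x < y) (h : blockIdx B x = blockIdx B y) : u x < u y := by
  induction y using Fin.induction with
  | zero => exact absurd hxy (Fin.not_lt_zero x)
  | succ j ih =>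
    have hxj : x ≤ j.castSucc := Fin.le_castSucc_iff.mpr hxy
    have hmono := blockIdx_mono B hxj
    have hj : j ∈ B := by
      by_contra hj
      rw [blockIdx_succ_of_not_mem hj] at h
      omega
    rw [blockIdx_succ_of_mem hj] at h
    refine lt_of_le_of_lt ?_ (mem_ascents.mp (hu hj))
    rcases hxj.lt_or_eq with hlt | rfl
    · exact (ih hlt h).le
    · exact le_rfl

lemma exists_descent_of_ne_one {B : Finset (Fin n)} {v : Perm (Fin (n + 1))}
    (hv : ∀ x, blockIdx B (v x) = blockIdx B x) (hv1 : v ≠ 1) :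
    ∃ i ∈ B, v i.succ < v i.castSucc := by
  by_contra! hasc
  refine hv1 (Perm.eq_one_of_strictMono (Fin.strictMono_iff_lt_succ.mpr fun i => ?_))
  have hne : v i.castSucc ≠ v i.succ := v.injective.ne (Fin.castSucc_lt_succ (i := i)).ne
  by_cases hi : i ∈ B
  · exact (hasc i hi).lt_of_ne hne
  · refine (blockIdx_mono B).reflect_lt ?_
    rw [hv, hv, blockIdx_succ_of_not_mem hi]
    omega

def weight (u : Perm (Fin (n + 1))) : ℕ :=
  ∑ x : Fin (n + 1), (x : ℕ) * (u x : ℕ)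

lemma weight_lt_weight_mul_sT {u : Perm (Fin (n + 1))} {i : Fin n}
    (h : u i.succ < u i.castSucc) : weight u < weight (u * sT i) := by
  have hswap : weight (u * sT i) = ∑ y, (sT i y : ℕ) * (u y : ℕ) := by
    rw [weight, ← Equiv.sum_comp (sT i)]
    simp [sT, swap_apply_self]
  have hdiff : (weight (u * sT i) : ℤ) - weight u = (u i.castSucc : ℕ) - (u i.succ : ℕ) := by
    rw [hswap, weight]
    push_cast
    rw [← sum_sub_distrib]
    simp_rw [← sub_mul]
    rw [Fintype.sum_eq_add i.castSucc i.succ (Fin.castSucc_lt_succ (i := i)).ne]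
    · simp [sub_eq_add_neg]
    · intro y ⟨h₁, h₂⟩
      simp [sT_apply_of_ne h₁ h₂]
  have hlt : (u i.succ : ℕ) < (u i.castSucc : ℕ) := h
  omega

/-- Right multiplication by `s_i` at a descent `i ∈ B` increases `weight`, so a maximizer of
`weight` on the coset `σ W_B` has no descent in `B`. -/
lemma exists_mem_Wsub_subset_ascents (B : Finset (Fin n)) (σ : Perm (Fin (n + 1))) :
    ∃ v ∈ Wsub B, B ⊆ ascents (σ * v) := by
  obtain ⟨v, hv⟩ := Finite.exists_max fun v : Wsub B => weight (σ * (v : Perm (Fin (n + 1))))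
  refine ⟨v, v.2, fun i hi => mem_ascents.mpr ?_⟩
  by_contra hasc
  have hdes : (σ * v) i.succ < (σ * v) i.castSucc :=
    (not_lt.mp hasc).lt_of_ne ((σ * v).injective.ne (Fin.castSucc_lt_succ (i := i)).ne')
  have := hv ⟨v * sT i, mul_mem v.2 (sT_mem_Wsub hi)⟩
  rw [Subgroup.coe_mk, ← mul_assoc] at this
  exact (weight_lt_weight_mul_sT hdes).not_ge this

lemma eq_one_of_mem_Wsub {B : Finset (Fin n)} {u v : Perm (Fin (n + 1))} (hv : v ∈ Wsub B)
    (hu : B ⊆ ascents u) (huv : B ⊆ ascents (u * v)) : v = 1 := by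
  by_contra hv1
  obtain ⟨i, hi, hdes⟩ := exists_descent_of_ne_one (blockIdx_apply_of_mem_Wsub hv) hv1
  have hblock : blockIdx B (v i.succ) = blockIdx B (v i.castSucc) := by
    rw [blockIdx_apply_of_mem_Wsub hv, blockIdx_apply_of_mem_Wsub hv, blockIdx_succ_of_mem hi]
  exact (mem_ascents.mp (huv hi)).asymm (lt_of_blockIdx_eq hu hdes hblock)

theorem card_filter_subset_ascents_mul_card_Wsub (B : Finset (Fin n)) :
    #(univ.filter fun σ : Perm (Fin (n + 1)) => B ⊆ ascents σ) * Nat.card (Wsub B)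
      = (n + 1).factorial := by
  have hbij : Function.Bijective fun u : univ.filter (fun σ => B ⊆ ascents σ) =>
      (u : Perm (Fin (n + 1)) ⧸ Wsub B) := by
    constructor
    · rintro ⟨u₁, hu₁⟩ ⟨u₂, hu₂⟩ h
      have hmem := QuotientGroup.eq.mp h
      rw [mem_filter] at hu₁ hu₂
      have := eq_one_of_mem_Wsub hmem hu₁.2 (by simpa using hu₂.2)
      rw [inv_mul_eq_one] at this
      exact Subtype.ext this
    · intro q
      obtain ⟨σ, rfl⟩ := QuotientGroup.mk_surjective q
      obtain ⟨v, hv, hasc⟩ := exists_mem_Wsub_subset_ascents B σ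
      refine ⟨⟨σ * v, mem_filter.mpr ⟨mem_univ _, hasc⟩⟩, QuotientGroup.eq.mpr ?_⟩
      simpa using inv_mem hv
  rw [← Nat.card_eq_finsetCard, Nat.card_eq_of_bijective _ hbij,
    ← Subgroup.card_eq_card_quotient_mul_card_subgroup, Nat.card_perm, Nat.card_eq_fintype_card,
    Fintype.card_fin]

lemma des_eq_card_filter (σ : Perm (Fin (n + 1))) :
    des σ = #(univ.filter fun i : Fin n => σ i.succ < σ i.castSucc) := by
  rw [des, Nat.card_eq_fintype_card, Fintype.card_subtype, eq_comm]
  refine card_bij (fun i _ => i.castSucc) (fun i hi => ?_)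
    (fun _ _ _ _ h => Fin.castSucc_injective _ h) (fun j hj => ?_)
  · simp only [mem_filter, mem_univ, true_and] at hi ⊢
    exact ⟨by simp, hi⟩
  · simp only [mem_filter, mem_univ, true_and] at hj
    obtain ⟨h, hj⟩ := hj
    exact ⟨⟨j, by omega⟩, by simpa [mem_filter] using hj, rfl⟩

lemma des_mul_revPerm (σ : Perm (Fin (n + 1))) : des (σ * Fin.revPerm) = #(ascents σ) := by
  rw [des_eq_card_filter, ascents]
  exact card_equiv Fin.revPerm fun i => by simp [Fin.rev_succ, Fin.rev_castSucc]

theorem sum_factorial_div_card_Wsub_smul (N : ℕ) :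
    ∑ A : Finset (Fin N), (((N + 1).factorial : ℚ) / Nat.card (Wsub A)) • (X - 1) ^ #A
      = Euler (N + 1) := by
  have hcoeff (A : Finset (Fin N)) : ((N + 1).factorial : ℚ) / Nat.card (Wsub A)
      = #(univ.filter fun σ : Perm (Fin (N + 1)) => A ⊆ ascents σ) := by
    rw [div_eq_iff (Nat.cast_ne_zero.mpr Nat.card_pos.ne'),
      ← card_filter_subset_ascents_mul_card_Wsub A]
    push_cast
    ring
  calc ∑ A : Finset (Fin N), (((N + 1).factorial : ℚ) / Nat.card (Wsub A)) • (X - 1) ^ #A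
      = ∑ A : Finset (Fin N), ∑ σ ∈ univ.filter (fun σ : Perm (Fin (N + 1)) => A ⊆ ascents σ),
          (X - 1 : ℚ[X]) ^ #A := by
        simp only [hcoeff, sum_const, Nat.cast_smul_eq_nsmul]
    _ = ∑ σ : Perm (Fin (N + 1)), ∑ A ∈ (ascents σ).powerset, (X - 1 : ℚ[X]) ^ #A :=
        sum_comm' fun A σ => by simp
    _ = ∑ σ : Perm (Fin (N + 1)), X ^ des (σ * Fin.revPerm) := by
        simp only [sum_powerset_sub_one_pow, des_mul_revPerm]
    _ = Euler (N + 1) :=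
        Fintype.sum_bijective _ (Group.mulRight_bijective _) _ _ fun _ => rfl

/-! ### Orders of parabolic subgroups -/

lemma support_subset_of_mem_Wsub {A : Finset (Fin n)} {v : Perm (Fin (n + 1))}
    (hv : v ∈ Wsub A) : v.support ⊆ A.image Fin.castSucc ∪ A.image Fin.succ := by
  induction hv using Subgroup.closure_induction with
  | mem _ h =>
    obtain ⟨i, hi, rfl⟩ := h
    rw [sT, support_swap (Fin.castSucc_lt_succ (i := i)).ne]
    intro x hx
    simp only [mem_insert, mem_singleton] at hx
    rcases hx with rfl | rfl
    · exact mem_union_left _ (mem_image_of_mem _ hi)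
    · exact mem_union_right _ (mem_image_of_mem _ hi)
  | one => simp
  | mul v w _ _ hv hw => exact (support_mul_le v w).trans (sup_le hv hw)
  | inv v _ hv => rwa [support_inv]

lemma Wsub_union (A B : Finset (Fin n)) : Wsub (A ∪ B) = Wsub A ⊔ Wsub B := by
  rw [Wsub, coe_union, Set.image_union, Subgroup.closure_union, Wsub, Wsub]

lemma card_Wsub_union {A B : Finset (Fin n)} (hAB : ∀ a ∈ A, ∀ b ∈ B, (a : ℕ) + 2 ≤ b) :
    Nat.card (Wsub (A ∪ B)) = Nat.card (Wsub A) * Nat.card (Wsub B) := by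
  have hsupp : Disjoint (A.image Fin.castSucc ∪ A.image Fin.succ)
      (B.image Fin.castSucc ∪ B.image Fin.succ) := by
    simp only [disjoint_left, mem_union, mem_image]
    rintro _ (⟨a, ha, rfl⟩ | ⟨a, ha, rfl⟩) (⟨b, hb, hab⟩ | ⟨b, hb, hab⟩) <;>
      · have := hAB a ha b hb
        simp [Fin.ext_iff] at hab
        omega
  have hdisj {v w : Perm (Fin (n + 1))} (hv : v ∈ Wsub A) (hw : w ∈ Wsub B) : v.Disjoint w :=
    disjoint_iff_disjoint_support.mpr <|
      hsupp.mono (support_subset_of_mem_Wsub hv) (support_subset_of_mem_Wsub hw)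
  let f := (Wsub A).subtype.noncommCoprod (Wsub B).subtype fun v w => (hdisj v.2 w.2).commute
  have hf : Function.Injective f := by
    refine (MonoidHom.noncommCoprod_injective _ _ _).mpr
      ⟨Subtype.val_injective, Subtype.val_injective, ?_⟩
    rw [Subgroup.range_subtype, Subgroup.range_subtype, Subgroup.disjoint_def]
    exact fun hv hw => disjoint_refl_iff.mp (hdisj hv hw)
  have hrange : f.range = Wsub (A ∪ B) := (MonoidHom.noncommCoprod_range _ _ _).trans <| by
    rw [Subgroup.range_subtype, Subgroup.range_subtype, Wsub_union]
  rw [← hrange, ← Nat.card_prod]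
  exact (Nat.card_congr (MonoidHom.ofInjective hf).toEquiv).symm

def shiftEmb (a : ℕ) {m N : ℕ} (h : a + m ≤ N) : Fin m ↪ Fin N :=
  (Fin.natAddEmb a).trans (Fin.castLEEmb h)

@[simp] lemma val_shiftEmb {a m N : ℕ} (h : a + m ≤ N) (i : Fin m) :
    (shiftEmb a h i : ℕ) = a + i := rfl

lemma Wsub_map_shiftEmb {a m : ℕ} (h : a + m ≤ n) (A : Finset (Fin m)) :
    Wsub (A.map (shiftEmb a h)) =
      (Wsub A).map (viaEmbeddingHom (shiftEmb a (by omega : a + (m + 1) ≤ n + 1))) := by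
  rw [Wsub, Wsub, MonoidHom.map_closure, coe_map, Set.image_image, Set.image_image]
  congr 1
  refine Set.image_congr fun i _ => ?_
  rw [viaEmbeddingHom_apply, sT, sT, viaEmbedding_swap]
  rfl

lemma card_Wsub_map_shiftEmb {a m : ℕ} (h : a + m ≤ n) (A : Finset (Fin m)) :
    Nat.card (Wsub (A.map (shiftEmb a h))) = Nat.card (Wsub A) := by
  rw [Wsub_map_shiftEmb h]
  exact (Nat.card_congr
    (Subgroup.equivMapOfInjective _ _ (viaEmbeddingHom_injective _)).toEquiv).symm

lemma Wsub_univ : Wsub (univ : Finset (Fin n)) = ⊤ := by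
  rw [Wsub, coe_univ, Set.image_univ]
  exact Subgroup.closure_eq_top_of_mclosure_eq_top (mclosure_swap_castSucc_succ n)

lemma card_Wsub_univ : Nat.card (Wsub (univ : Finset (Fin n))) = (n + 1).factorial := by
  rw [Wsub_univ, Subgroup.card_top, Nat.card_perm, Nat.card_eq_fintype_card, Fintype.card_fin]

/-- The simple transpositions `s_{a+1}, …, s_b`, as a subset of the index type `Fin n`. -/
def idxIco (n a b : ℕ) : Finset (Fin n) :=
  univ.filter fun j => a ≤ (j : ℕ) ∧ (j : ℕ) < b

@[simp] lemma mem_idxIco {a b : ℕ} {j : Fin n} :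
    j ∈ idxIco n a b ↔ a ≤ (j : ℕ) ∧ (j : ℕ) < b := by
  simp [idxIco]

lemma idxIco_eq_map {a b : ℕ} (hab : a ≤ b) (hb : b ≤ n) :
    idxIco n a b = univ.map (shiftEmb a (by omega : a + (b - a) ≤ n)) := by
  ext j
  simp only [mem_idxIco, mem_map, mem_univ, true_and, Fin.ext_iff, val_shiftEmb]
  exact ⟨fun hj => ⟨⟨j - a, by omega⟩, by simp; omega⟩,
    fun ⟨i, hi⟩ => by have := i.isLt; omega⟩

lemma idxIco_zero_eq_map {b : ℕ} (hb : b ≤ n) :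
    idxIco n 0 b = (univ : Finset (Fin b)).map (shiftEmb 0 (by omega : 0 + b ≤ n)) :=
  idxIco_eq_map (Nat.zero_le b) hb

lemma card_idxIco {a b : ℕ} (hb : b ≤ n) : #(idxIco n a b) = b - a := by
  rcases le_total a b with hab | hba
  · rw [idxIco_eq_map hab hb, card_map, card_univ, Fintype.card_fin]
  · rw [Nat.sub_eq_zero_of_le hba, card_eq_zero, eq_empty_iff_forall_notMem]
    simp only [mem_idxIco]
    omega

lemma card_Wsub_idxIco {a b : ℕ} (hab : a ≤ b + 1) (hb : b ≤ n) :
    Nat.card (Wsub (idxIco n a b)) = (b + 1 - a).factorial := by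
  rcases hab.lt_or_eq with hab | rfl
  · rw [idxIco_eq_map (by omega) hb, card_Wsub_map_shiftEmb, card_Wsub_univ]
    congr 1
    omega
  · have : idxIco n (b + 1) b = ∅ := by
      ext
      simp only [mem_idxIco, notMem_empty, iff_false]
      omega
    rw [this, Nat.sub_self, Wsub, coe_empty, Set.image_empty, Subgroup.closure_empty,
      Subgroup.card_bot, Nat.factorial_zero]

lemma Euler_zero : Euler 0 = 1 := by
  simp [Euler, des]

lemma sum_powerset_idxIco_eq_Euler {m : ℕ} (hm : m ≤ n + 1) :
    ∑ A ∈ (idxIco n 0 (m - 1)).powerset,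
      ((m.factorial : ℚ) / Nat.card (Wsub A)) • (X - 1 : ℚ[X]) ^ #A = Euler m := by
  cases m with
  | zero =>
    have : idxIco n 0 0 = ∅ := by ext; simp
    simp [this, Euler_zero, Wsub]
  | succ m =>
    rw [Nat.add_sub_cancel, idxIco_zero_eq_map (by omega), powerset_map, sum_map,
      powerset_univ, ← sum_factorial_div_card_Wsub_smul m]
    refine sum_congr rfl fun A _ => ?_
    simp only [RelEmbedding.coe_toEmbedding, mapEmbedding_apply, card_Wsub_map_shiftEmb, card_map]

/-! ### Components and `A*` -/

lemma sameComp.mem_of_between {A : Finset (Fin n)} {a b : Fin n} (h : sameComp A a b)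
    (ha : a ∈ A) {c : Fin n}
    (hc : (a : ℕ) ≤ c ∧ (c : ℕ) ≤ b ∨ (b : ℕ) ≤ c ∧ (c : ℕ) ≤ a) : c ∈ A := by
  induction h generalizing c with
  | refl => rwa [show c = a from Fin.ext (by omega)]
  | @tail b' b _ hstep ih =>
    obtain ⟨-, hb, hadj⟩ := hstep
    by_cases hcb : c = b
    · rwa [hcb]
    · exact ih (by rw [Fin.ext_iff] at hcb; omega)

lemma sameComp_of_forall_mem {A : Finset (Fin n)} {a b : Fin n} (hba : (b : ℕ) ≤ a)
    (h : ∀ c : Fin n, (b : ℕ) ≤ c → (c : ℕ) ≤ a → c ∈ A) : sameComp A a b := by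
  obtain ⟨d, hd⟩ := Nat.exists_eq_add_of_le hba
  induction d generalizing a with
  | zero =>
    rw [show a = b from Fin.ext (by omega)]
    exact Relation.ReflTransGen.refl
  | succ d ih =>
    let a' : Fin n := ⟨a - 1, by omega⟩
    have ha' : (a' : ℕ) = a - 1 := rfl
    have hstep : a ∈ A ∧ a' ∈ A ∧ ((a : ℕ) + 1 = a' ∨ (a' : ℕ) + 1 = a) :=
      ⟨h a (by omega) le_rfl, h a' (by omega) (by omega), Or.inr (by omega)⟩
    exact .head hstep (ih (by omega) (fun c hc hca => h c hc (by omega)) (by omega))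

lemma noCompIn_of_disjoint {A J : Finset (Fin n)} (h : Disjoint A J) : noCompIn A J :=
  fun a ha => ⟨a, ha, disjoint_left.mp h ha, Relation.ReflTransGen.refl⟩

lemma noCompIn.mono {A J J' : Finset (Fin n)} (hA : noCompIn A J) (hJ : J' ⊆ J) :
    noCompIn A J' := fun a ha =>
  let ⟨b, hb, hbJ, hab⟩ := hA a ha
  ⟨b, hb, fun h => hbJ (hJ h), hab⟩

lemma Astar_empty (A : Finset (Fin n)) : Astar A ∅ = A := by
  simp [Astar]

lemma Astar_eq_union_of_subset {A : Finset (Fin n)} {m t : ℕ} (hA : A ⊆ idxIco n 0 (m - 1))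
    (ht : m ≤ t) : Astar A (idxIco n t n) = A ∪ idxIco n t n := by
  classical
  rw [Astar, filter_true_of_mem]
  intro j hj a ha
  have := mem_idxIco.mp (hA ha)
  have := mem_idxIco.mp hj
  exact commute_sT_iff.mpr ⟨by omega, by omega⟩

lemma Astar_union_idxIco {A : Finset (Fin n)} {m i : ℕ} (hA : A ⊆ idxIco n 0 (m - 1)) :
    Astar (A ∪ idxIco n m (m + i + 1)) (idxIco n (m + 1) n)
      = A ∪ idxIco n m (m + i + 1) ∪ idxIco n (m + i + 2) n := by
  rw [Astar]
  congr 1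
  ext j
  simp only [mem_filter, mem_idxIco, commute_sT_iff]
  constructor
  · rintro ⟨⟨hj₁, hj₂⟩, hcomm⟩
    refine ⟨?_, hj₂⟩
    by_contra hlt
    have := hcomm ⟨j - 1, by omega⟩
      (mem_union_right _ (mem_idxIco.mpr ⟨by simp; omega, by simp; omega⟩))
    simp only at this
    omega
  · rintro ⟨hj₁, hj₂⟩
    refine ⟨⟨by omega, hj₂⟩, fun a ha => ?_⟩
    rcases mem_union.mp ha with ha | ha
    · have := mem_idxIco.mp (hA ha)
      omega
    · have := mem_idxIco.mp ha
      omega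

lemma subset_idxIco_of_forall_commute {A : Finset (Fin n)} {m : Fin n}
    (hA : noCompIn A (idxIco n m n)) (hmA : m ∉ A) (hcomm : ∀ a ∈ A, Commute (sT m) (sT a)) :
    A ⊆ idxIco n 0 (m - 1) := by
  intro a ha
  obtain ⟨b, hb, hbJ, hab⟩ := hA a ha
  have hbm : (b : ℕ) < m := by
    simp only [mem_idxIco, not_and, not_lt] at hbJ
    have := b.isLt
    omega
  have hadj := commute_sT_iff.mp (hcomm a ha)
  have ham : a ≠ m := fun h => hmA (h ▸ ha)
  rw [Ne, Fin.ext_iff] at ham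
  rw [mem_idxIco]
  by_contra hlow
  exact hmA (hab.mem_of_between ha (Or.inr ⟨by omega, by omega⟩))

lemma Astar_idxIco_eq_of_not_subset {A : Finset (Fin n)} {m : ℕ} (hm : m < n)
    (hA : noCompIn A (idxIco n m n)) (hlow : ¬A ⊆ idxIco n 0 (m - 1)) :
    Astar A (idxIco n m n) = Astar A (idxIco n (m + 1) n) := by
  have hinsert : idxIco n m n = insert ⟨m, hm⟩ (idxIco n (m + 1) n) := by
    ext j
    simp only [mem_idxIco, mem_insert, Fin.ext_iff]
    omega
  rw [hinsert, Astar, Astar, filter_insert]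
  split_ifs with hcomm
  · by_cases hmA : ⟨m, hm⟩ ∈ A
    · rw [union_insert, insert_eq_of_mem (mem_union_left _ hmA)]
    · exact absurd (subset_idxIco_of_forall_commute (m := ⟨m, hm⟩) hA hmA hcomm) hlow
  · rfl

lemma card_Wsub_union_idxIco {A : Finset (Fin n)} {m t : ℕ} (hA : A ⊆ idxIco n 0 (m - 1))
    (ht : m ≤ t) (htn : t ≤ n + 1) :
    Nat.card (Wsub (A ∪ idxIco n t n)) = Nat.card (Wsub A) * (n + 1 - t).factorial := by
  rw [card_Wsub_union fun a ha b hb => ?_, card_Wsub_idxIco htn le_rfl]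
  have := mem_idxIco.mp (hA ha)
  have := mem_idxIco.mp hb
  omega

lemma card_Wsub_union_idxIco_union {A : Finset (Fin n)} {m i : ℕ} (hA : A ⊆ idxIco n 0 (m - 1))
    (hmi : m + i < n) :
    Nat.card (Wsub (A ∪ idxIco n m (m + i + 1) ∪ idxIco n (m + i + 2) n))
      = Nat.card (Wsub A) * (i + 2).factorial * (n - m - i - 1).factorial := by
  rw [card_Wsub_union fun a ha b hb => ?_, card_Wsub_union fun a ha b hb => ?_,
    card_Wsub_idxIco (by omega) (by omega), card_Wsub_idxIco (by omega) le_rfl,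
    show m + i + 1 + 1 - m = i + 2 by omega, show n + 1 - (m + i + 2) = n - m - i - 1 by omega]
  · have := mem_idxIco.mp (hA ha)
    have := mem_idxIco.mp hb
    omega
  · have := mem_idxIco.mp hb
    rcases mem_union.mp ha with ha | ha
    · have := mem_idxIco.mp (hA ha)
      omega
    · have := mem_idxIco.mp ha
      omega

lemma exists_eq_union_idxIco {A : Finset (Fin n)} {m : ℕ} (h₁ : noCompIn A (idxIco n (m + 1) n))
    (h₀ : ¬noCompIn A (idxIco n m n)) :
    ∃ A' ⊆ idxIco n 0 (m - 1), ∃ i, m + i < n ∧ A = A' ∪ idxIco n m (m + i + 1) := by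
  simp only [noCompIn, not_forall, not_exists, not_and, exists_prop] at h₀
  obtain ⟨a, ha, hcomp⟩ := h₀
  obtain ⟨b, hb, hbJ, hab⟩ := h₁ a ha
  simp only [mem_idxIco, not_and, not_lt] at hbJ
  have hbm : (b : ℕ) = m := by
    by_contra h
    exact hcomp b hb (by simp only [mem_idxIco, not_and, not_lt]; omega) hab
  have hprev : ∀ x ∈ A, (x : ℕ) + 1 ≠ m := fun x hx hxm =>
    hcomp x hx (by simp only [mem_idxIco, not_and, not_lt]; omega)
      (hab.tail ⟨hb, hx, Or.inr (by omega)⟩)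
  have hinterval :
      ∀ x ∈ A, m ≤ (x : ℕ) → ∀ c : Fin n, m ≤ (c : ℕ) → (c : ℕ) ≤ x → c ∈ A := by
    intro x hx hmx c hmc hcx
    obtain ⟨b', hb', hb'J, hxb'⟩ := h₁ x hx
    simp only [mem_idxIco, not_and, not_lt] at hb'J
    exact hxb'.mem_of_between hx (Or.inr ⟨by omega, hcx⟩)
  obtain ⟨e, he, hmax⟩ := (A.filter fun x : Fin n => m ≤ (x : ℕ)).exists_max_image
    (fun x => (x : ℕ)) ⟨b, mem_filter.mpr ⟨hb, hbm.ge⟩⟩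
  rw [mem_filter] at he
  refine ⟨A.filter fun x : Fin n => (x : ℕ) + 1 < m, fun x hx => ?_, e - m, by omega, ?_⟩
  · rw [mem_filter] at hx
    rw [mem_idxIco]
    omega
  ext x
  simp only [mem_union, mem_filter, mem_idxIco]
  constructor
  · intro hx
    by_cases hxm : (x : ℕ) + 1 < m
    · exact Or.inl ⟨hx, hxm⟩
    · have := hprev x hx
      have := hmax x (mem_filter.mpr ⟨hx, by omega⟩)
      omega
  · rintro (⟨hx, -⟩ | ⟨hmx, hxe⟩)
    · exact hx
    · exact hinterval e he.1 he.2 x hmx (by omega)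

lemma noCompIn_union_idxIco {A : Finset (Fin n)} {m : ℕ} (hA : A ⊆ idxIco n 0 (m - 1))
    (i : ℕ) : noCompIn (A ∪ idxIco n m (m + i + 1)) (idxIco n (m + 1) n) := by
  intro a ha
  rcases mem_union.mp ha with ha' | ha'
  · have := mem_idxIco.mp (hA ha')
    exact ⟨a, ha, by simp only [mem_idxIco]; omega, Relation.ReflTransGen.refl⟩
  · have := mem_idxIco.mp ha'
    refine ⟨⟨m, by omega⟩,
      mem_union_right _ (mem_idxIco.mpr ⟨le_rfl, by simp only; omega⟩), by simp,
      sameComp_of_forall_mem (by simp only; omega) ?_⟩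
    exact fun c hmc hca => mem_union_right _ (mem_idxIco.mpr ⟨hmc, by omega⟩)

lemma not_noCompIn_union_idxIco {A : Finset (Fin n)} {m : ℕ} (hA : A ⊆ idxIco n 0 (m - 1))
    {i : ℕ} (hmi : m + i < n) : ¬noCompIn (A ∪ idxIco n m (m + i + 1)) (idxIco n m n) := by
  intro h
  obtain ⟨b, -, hbJ, hmb⟩ :=
    h ⟨m, by omega⟩ (mem_union_right _ (mem_idxIco.mpr ⟨le_rfl, by simp only; omega⟩))
  simp only [mem_idxIco, not_and, not_lt] at hbJ
  have hbm : (b : ℕ) < m := by have := b.isLt; omega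
  rcases mem_union.mp (hmb.mem_of_between (c := ⟨m - 1, by omega⟩)
      (mem_union_right _ (mem_idxIco.mpr ⟨le_rfl, by simp only; omega⟩))
      (Or.inr ⟨by simp only; omega, by simp only; omega⟩)) with h' | h'
  · have := mem_idxIco.mp (hA h')
    simp only at this
    omega
  · have := mem_idxIco.mp h'
    simp only at this
    omega

lemma union_idxIco_inj {A₁ A₂ : Finset (Fin n)} {m i₁ i₂ : ℕ}
    (hA₁ : A₁ ⊆ idxIco n 0 (m - 1)) (hA₂ : A₂ ⊆ idxIco n 0 (m - 1))
    (hi₁ : m + i₁ < n) (hi₂ : m + i₂ < n)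
    (h : A₁ ∪ idxIco n m (m + i₁ + 1) = A₂ ∪ idxIco n m (m + i₂ + 1)) : A₁ = A₂ ∧ i₁ = i₂ := by
  have key (j : Fin n) : j ∈ A₁ ∨ m ≤ (j : ℕ) ∧ (j : ℕ) < m + i₁ + 1 ↔
      j ∈ A₂ ∨ m ≤ (j : ℕ) ∧ (j : ℕ) < m + i₂ + 1 := by
    simpa using Finset.ext_iff.mp h j
  have low₁ (j : Fin n) (hj : j ∈ A₁) := mem_idxIco.mp (hA₁ hj)
  have low₂ (j : Fin n) (hj : j ∈ A₂) := mem_idxIco.mp (hA₂ hj)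
  refine ⟨Finset.ext fun j => ⟨fun hj => ?_, fun hj => ?_⟩, le_antisymm ?_ ?_⟩
  · have := low₁ j hj
    exact ((key j).mp (Or.inl hj)).resolve_right (by omega)
  · have := low₂ j hj
    exact ((key j).mpr (Or.inl hj)).resolve_right (by omega)
  · rcases (key ⟨m + i₁, hi₁⟩).mp (Or.inr ⟨by simp, by simp⟩) with h' | h'
    · have := low₂ _ h'
      simp only at this
      omega
    · simp only at h'
      omega
  · rcases (key ⟨m + i₂, hi₂⟩).mpr (Or.inr ⟨by simp, by simp⟩) with h' | h'
    · have := low₁ _ h'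
      simp only at this
      omega
    · simp only at h'
      omega

/-! ### The recurrence -/

open scoped Classical in
noncomputable def admissibleSets (J : Finset (Fin n)) : Finset (Finset (Fin n)) :=
  univ.filter fun A => noCompIn A J

open scoped Classical in
noncomputable def hterm (J A : Finset (Fin n)) : ℚ[X] :=
  (((n + 1).factorial : ℚ) / Nat.card (Wsub (Astar A J))) • (X - 1) ^ #A

lemma hpol_eq_sum (n k : ℕ) :
    hpol n k = ∑ A ∈ admissibleSets (Jset n k), hterm (Jset n k) A :=
  rfl

lemma Jset_eq_idxIco (n k : ℕ) : Jset n k = idxIco n (n - k) n := by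
  ext j
  simp [Jset, j.isLt]

theorem hpol_zero (n : ℕ) : hpol n 0 = Euler (n + 1) := by
  classical
  have hJ : Jset n 0 = ∅ := by
    rw [Jset_eq_idxIco, Nat.sub_zero]
    ext j
    simp
  rw [hpol_eq_sum, hJ, admissibleSets,
    filter_true_of_mem fun A _ => noCompIn_of_disjoint (disjoint_empty_right A),
    ← sum_factorial_div_card_Wsub_smul n]
  exact sum_congr rfl fun A _ => by rw [hterm, Astar_empty]

variable {m k : ℕ}

lemma sum_admissibleSets_hterm_sub_hterm (hk : 0 < k) :
    ∑ A ∈ admissibleSets (idxIco (m + k) m (m + k)),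
        (hterm (idxIco (m + k) (m + 1) (m + k)) A - hterm (idxIco (m + k) m (m + k)) A)
      = ((m + k + 1).choose (k + 1) : ℚ) • ((k : ℚ[X]) * Euler m) := by
  classical
  have hsub : (idxIco (m + k) 0 (m - 1)).powerset ⊆ admissibleSets (idxIco (m + k) m (m + k)) :=
    fun A hA => by
      rw [mem_powerset] at hA
      refine mem_filter.mpr
        ⟨mem_univ _, noCompIn_of_disjoint (disjoint_left.mpr fun j hj hj' => ?_)⟩
      have := mem_idxIco.mp (hA hj)
      have := mem_idxIco.mp hj'
      omega
  rw [← sum_subset hsub fun A hA hlow => ?_]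
  · rw [← sum_powerset_idxIco_eq_Euler (n := m + k) (m := m) (by omega), mul_sum, smul_sum]
    refine sum_congr rfl fun A hA => ?_
    rw [mem_powerset] at hA
    rw [hterm, hterm, Astar_eq_union_of_subset hA (Nat.le_succ m),
      Astar_eq_union_of_subset hA le_rfl, card_Wsub_union_idxIco hA (Nat.le_succ m) (by omega),
      card_Wsub_union_idxIco hA le_rfl (by omega), ← sub_smul,
      show m + k + 1 - (m + 1) = k by omega, show m + k + 1 - m = k + 1 by omega]
    push_cast
    rw [factorial_div_sub_factorial_div m k _ Nat.card_pos]
    simp only [smul_eq_C_mul, map_mul, map_natCast]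
    ring
  · rw [mem_powerset] at hlow
    rw [hterm, hterm, Astar_idxIco_eq_of_not_subset (by omega) (mem_filter.mp hA).2 hlow, sub_self]

lemma sum_sdiff_admissibleSets_eq_sum_product {M : Type*} [AddCommMonoid M]
    (f : Finset (Fin (m + k)) → M) :
    ∑ A ∈ admissibleSets (idxIco (m + k) (m + 1) (m + k)) \
        admissibleSets (idxIco (m + k) m (m + k)), f A
      = ∑ p ∈ (idxIco (m + k) 0 (m - 1)).powerset ×ˢ range k,
          f (p.1 ∪ idxIco (m + k) m (m + p.2 + 1)) := by
  classical
  have hmaps : ∀ p ∈ (idxIco (m + k) 0 (m - 1)).powerset ×ˢ range k,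
      p.1 ∪ idxIco (m + k) m (m + p.2 + 1) ∈ admissibleSets (idxIco (m + k) (m + 1) (m + k)) \
        admissibleSets (idxIco (m + k) m (m + k)) := by
    intro p hp
    obtain ⟨hA, hi⟩ := mem_product.mp hp
    rw [mem_powerset] at hA
    rw [mem_range] at hi
    simp only [admissibleSets, mem_sdiff, mem_filter, mem_univ, true_and]
    exact ⟨noCompIn_union_idxIco hA _, not_noCompIn_union_idxIco hA (by omega)⟩
  have hinj :
      Set.InjOn (fun p : Finset (Fin (m + k)) × ℕ => p.1 ∪ idxIco (m + k) m (m + p.2 + 1))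
      ((idxIco (m + k) 0 (m - 1)).powerset ×ˢ range k : Finset _) := by
    intro p hp q hq hpq
    obtain ⟨hp₁, hp₂⟩ := mem_product.mp hp
    obtain ⟨hq₁, hq₂⟩ := mem_product.mp hq
    rw [mem_powerset] at hp₁ hq₁
    rw [mem_range] at hp₂ hq₂
    obtain ⟨h₁, h₂⟩ := union_idxIco_inj hp₁ hq₁ (by omega) (by omega) hpq
    exact Prod.ext h₁ h₂
  have hsurj :
      Set.SurjOn (fun p : Finset (Fin (m + k)) × ℕ => p.1 ∪ idxIco (m + k) m (m + p.2 + 1))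
        ((idxIco (m + k) 0 (m - 1)).powerset ×ˢ range k : Finset _)
        (admissibleSets (idxIco (m + k) (m + 1) (m + k)) \
          admissibleSets (idxIco (m + k) m (m + k)) : Finset _) := by
    intro A hA
    rw [mem_coe, mem_sdiff, admissibleSets, admissibleSets, mem_filter, mem_filter] at hA
    obtain ⟨A', hA', i, hi, rfl⟩ :=
      exists_eq_union_idxIco hA.1.2 fun h => hA.2 ⟨mem_univ _, h⟩
    exact ⟨(A', i), by simp [hA']; omega, rfl⟩
  exact (sum_nbij _ hmaps hinj hsurj fun _ _ => rfl).symm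

lemma hterm_union_idxIco {A : Finset (Fin (m + k))} (hA : A ⊆ idxIco (m + k) 0 (m - 1))
    {i : ℕ} (hi : i < k) :
    hterm (idxIco (m + k) (m + 1) (m + k)) (A ∪ idxIco (m + k) m (m + i + 1))
      = ((m + k + 1).choose (k + 1) : ℚ) •
          (((k + 1).choose (i + 2) : ℚ[X]) * (X - 1) ^ (i + 1) *
            (((m.factorial : ℚ) / Nat.card (Wsub A)) • (X - 1) ^ #A)) := by
  have hdisj : Disjoint A (idxIco (m + k) m (m + i + 1)) := disjoint_left.mpr fun j hj hj' => by
    have := mem_idxIco.mp (hA hj)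
    have := mem_idxIco.mp hj'
    omega
  rw [hterm, Astar_union_idxIco hA, card_Wsub_union_idxIco_union hA (by omega),
    card_union_of_disjoint hdisj, card_idxIco (by omega),
    show m + k - m - i - 1 = k - 1 - i by omega, show m + i + 1 - m = i + 1 by omega]
  push_cast
  rw [factorial_div_eq_choose_mul m k i _ hi Nat.card_pos]
  simp only [smul_eq_C_mul, map_mul, map_natCast]
  ring

lemma sum_sdiff_admissibleSets_hterm :
    ∑ A ∈ admissibleSets (idxIco (m + k) (m + 1) (m + k)) \
          admissibleSets (idxIco (m + k) m (m + k)),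
        hterm (idxIco (m + k) (m + 1) (m + k)) A
      = ((m + k + 1).choose (k + 1) : ℚ) •
          ((∑ i ∈ range k, ((k + 1).choose (i + 2) : ℚ[X]) * (X - 1) ^ (i + 1)) *
            Euler m) := by
  rw [sum_sdiff_admissibleSets_eq_sum_product, sum_product,
    ← sum_powerset_idxIco_eq_Euler (n := m + k) (m := m) (by omega), mul_sum, smul_sum]
  refine sum_congr rfl fun A hA => ?_
  rw [sum_mul, smul_sum]
  exact sum_congr rfl fun i hi => hterm_union_idxIco (mem_powerset.mp hA) (mem_range.mp hi)

lemma hpol_pred_sub_hpol (hk : 0 < k) :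
    hpol (m + k) (k - 1) - hpol (m + k) k
      = ((m + k + 1).choose (k + 1) : ℚ) • ((∑ i ∈ Icc 1 k, X ^ i) * Euler m) := by
  classical
  have hmono : admissibleSets (idxIco (m + k) m (m + k)) ⊆
      admissibleSets (idxIco (m + k) (m + 1) (m + k)) :=
    monotone_filter_right _ fun A _ hA => hA.mono fun j hj => by
      have := mem_idxIco.mp hj
      exact mem_idxIco.mpr ⟨by omega, this.2⟩
  rw [hpol_eq_sum, hpol_eq_sum, Jset_eq_idxIco, Jset_eq_idxIco,
    show m + k - (k - 1) = m + 1 by omega, Nat.add_sub_cancel, ← sum_sdiff hmono, add_sub_assoc,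
    ← sum_sub_distrib, sum_sdiff_admissibleSets_hterm, sum_admissibleSets_hterm_sub_hterm hk,
    ← smul_add, ← add_mul, sum_Icc_pow_eq, add_comm (k : ℚ[X])]

end

theorem hpoly_recurrence (n k : ℕ) (hk1 : 1 ≤ k) (hkn : k ≤ n) :
    hpol n 0 = Euler (n + 1) ∧
    hpol n k = hpol n (k - 1) -
      ((n + 1).choose (k + 1) : ℚ) • ((∑ i ∈ Finset.Icc 1 k, X ^ i) * Euler (n - k)) := by
  refine ⟨hpol_zero n, ?_⟩
  obtain ⟨m, rfl⟩ : ∃ m, n = m + k := ⟨n - k, by omega⟩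
  rw [Nat.add_sub_cancel, ← hpol_pred_sub_hpol hk1, sub_sub_cancel]
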